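/- (AIV identification of mean potential outcome) Assume: (i) consistency Y = Y(A); (ii) Y(a) ⊥ (A,Z) | (U,L); (iii) Z ⊥ U | L; (iv) P(A=a | Z,U,L) = b(U,L) + c(Z,L); and (v) π(Z,L) is bounded with Cov(1{A=a}, π(Z,L) | L) ≠ 0 a.s. Then E[Y(a)] = E[ Cov(1{A=a}·Y, π(Z,L) | L) / Cov(1{A=a}, π(Z,L) | L) ]. -/

import Mathlib

open MeasureTheory ProbabilityTheory

/-- The σ-algebra generated by a random variable. -/
abbrev mV {Ω β : Type*} [MeasurableSpace β] (X : Ω → β) : MeasurableSpace Ω :=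
  MeasurableSpace.comap X inferInstance

/-- Conditional covariance given a sub-σ-algebra `m`:
`Cov(X, Y | m) = E[XY | m] - E[X | m] * E[Y | m]`. -/
noncomputable def condCov {Ω : Type*} [MeasurableSpace Ω] (μ : Measure Ω)
    (m : MeasurableSpace Ω) (X Y : Ω → ℝ) : Ω → ℝ :=
  μ[X * Y | m] - μ[X | m] * μ[Y | m]

open MeasurableSpace Set

set_option linter.unusedSectionVars false
set_option linter.unusedVariables false

section Helpers

variable {Ω : Type*} {mΩ : MeasurableSpace Ω} {μ : Measure Ω} [IsFiniteMeasure μ]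

lemma integrable_of_ae_bdd {f : Ω → ℝ} {C : ℝ} (hf : AEStronglyMeasurable f μ)
    (hbd : ∀ᵐ ω ∂μ, |f ω| ≤ C) : Integrable f μ :=
  (integrable_const C).mono' hf (hbd.mono fun ω h => by simpa [Real.norm_eq_abs] using h)

/-- transfer a bounded factor onto its conditional expectation inside an integral -/
lemma integral_mul_condexp {m : MeasurableSpace Ω} (hm : m ≤ mΩ)
    {X H : Ω → ℝ} (hX : StronglyMeasurable[m] X)
    (hXH : Integrable (fun ω => X ω * H ω) μ) (hH : Integrable H μ) :
    ∫ ω, X ω * H ω ∂μ = ∫ ω, X ω * (μ[H|m]) ω ∂μ := by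
  haveI : IsFiniteMeasure (μ.trim hm) := isFiniteMeasure_trim hm
  have h := condExp_mul_of_stronglyMeasurable_left (μ := μ) hX hXH hH
  calc ∫ ω, X ω * H ω ∂μ = ∫ ω, (μ[X * H|m]) ω ∂μ := (integral_condExp hm).symm
    _ = ∫ ω, X ω * (μ[H|m]) ω ∂μ := integral_congr_ae (h.mono fun ω hω => hω)

lemma abs_condexp_le_of_abs_le {m : MeasurableSpace Ω} (hm : m ≤ mΩ) {f : Ω → ℝ} {C : ℝ}
    (hf : Integrable f μ) (hbd : ∀ᵐ ω ∂μ, |f ω| ≤ C) (hC : 0 ≤ C) :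
    ∀ᵐ ω ∂μ, |(μ[f|m]) ω| ≤ C := by
  haveI : IsFiniteMeasure (μ.trim hm) := isFiniteMeasure_trim hm
  have h1 : μ[f|m] ≤ᵐ[μ] μ[(fun _ => C)|m] :=
    condExp_mono hf (integrable_const C) (hbd.mono fun ω h => (abs_le.mp h).2)
  have h2 : μ[(fun _ => -C)|m] ≤ᵐ[μ] μ[f|m] :=
    condExp_mono (integrable_const (-C)) hf (hbd.mono fun ω h => (abs_le.mp h).1)
  rw [condExp_const (μ := μ) hm C] at h1
  rw [condExp_const (μ := μ) hm (-C)] at h2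
  filter_upwards [h1, h2] with ω h1 h2
  exact abs_le.mpr ⟨h2, h1⟩

lemma sup_eq_generateFrom_inter (m₁ m₂ : MeasurableSpace Ω) :
    m₁ ⊔ m₂ = MeasurableSpace.generateFrom
      {s | ∃ s₁, MeasurableSet[m₁] s₁ ∧ ∃ s₂, MeasurableSet[m₂] s₂ ∧ s = s₁ ∩ s₂} := by
  refine le_antisymm (sup_le ?_ ?_) (MeasurableSpace.generateFrom_le ?_)
  · intro s hs
    exact measurableSet_generateFrom ⟨s, hs, Set.univ, MeasurableSet.univ, (Set.inter_univ s).symm⟩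
  · intro s hs
    exact measurableSet_generateFrom ⟨Set.univ, MeasurableSet.univ, s, hs, (Set.univ_inter s).symm⟩
  · rintro s ⟨s₁, h₁, s₂, h₂, rfl⟩
    exact ((le_sup_left : m₁ ≤ m₁ ⊔ m₂) _ h₁).inter ((le_sup_right : m₂ ≤ m₁ ⊔ m₂) _ h₂)

lemma isPiSystem_inter_sets (m₁ m₂ : MeasurableSpace Ω) :
    IsPiSystem {s : Set Ω | ∃ s₁, MeasurableSet[m₁] s₁ ∧ ∃ s₂, MeasurableSet[m₂] s₂ ∧ s = s₁ ∩ s₂} := by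
  rintro s ⟨s₁, h₁, s₂, h₂, rfl⟩ t ⟨t₁, g₁, t₂, g₂, rfl⟩ -
  exact ⟨s₁ ∩ t₁, h₁.inter g₁, s₂ ∩ t₂, h₂.inter g₂, by rw [Set.inter_inter_inter_comm]⟩

lemma abs_indicator_one_le' (s : Set Ω) (ω : Ω) : |s.indicator (fun _ => (1:ℝ)) ω| ≤ 1 := by
  by_cases h : ω ∈ s <;> simp [h]

end Helpers

section CondIndepLemmas

variable {Ω : Type*} {m' m₁ m₂ : MeasurableSpace Ω} {mΩ : MeasurableSpace Ω}
  [StandardBorelSpace Ω] {μ : Measure Ω} [IsFiniteMeasure μ]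

lemma condexp_indicator_of_condIndep (hm' : m' ≤ mΩ) (h₁ : m₁ ≤ mΩ) (h₂ : m₂ ≤ mΩ)
    (hCI : CondIndep m' m₁ m₂ hm' μ) {s₂ : Set Ω} (hs₂ : MeasurableSet[m₂] s₂) :
    μ[s₂.indicator (fun _ => (1:ℝ)) | m₁ ⊔ m'] =ᵐ[μ] μ[s₂.indicator (fun _ => (1:ℝ)) | m'] := by
  haveI : IsFiniteMeasure (μ.trim hm') := isFiniteMeasure_trim hm'
  have hsup : m₁ ⊔ m' ≤ mΩ := sup_le h₁ hm'
  haveI : IsFiniteMeasure (μ.trim hsup) := isFiniteMeasure_trim hsup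
  have hI₂int : Integrable (s₂.indicator (fun _ => (1:ℝ))) μ :=
    (integrable_const (1:ℝ)).indicator (h₂ _ hs₂)
  have hWsm : StronglyMeasurable[m'] (μ[s₂.indicator (fun _ => (1:ℝ))|m']) :=
    stronglyMeasurable_condExp
  have hWint : Integrable (μ[s₂.indicator (fun _ => (1:ℝ))|m']) μ := integrable_condExp
  have hWbd : ∀ᵐ ω ∂μ, |(μ[s₂.indicator (fun _ => (1:ℝ))|m']) ω| ≤ 1 :=
    abs_condexp_le_of_abs_le hm' hI₂int
      (Filter.Eventually.of_forall fun ω => abs_indicator_one_le' s₂ ω) one_pos.le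
  have key : ∀ t, MeasurableSet[m₁ ⊔ m'] t →
      ∫ ω in t, (μ[s₂.indicator (fun _ => (1:ℝ))|m']) ω ∂μ
        = ∫ ω in t, s₂.indicator (fun _ => (1:ℝ)) ω ∂μ := by
    refine MeasurableSpace.induction_on_inter (m := m₁ ⊔ m')
      (C := fun t _ => ∫ ω in t, (μ[s₂.indicator (fun _ => (1:ℝ))|m']) ω ∂μ
        = ∫ ω in t, s₂.indicator (fun _ => (1:ℝ)) ω ∂μ)
      (sup_eq_generateFrom_inter m₁ m') (isPiSystem_inter_sets m₁ m') (by simp) ?_ ?_ ?_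
    · -- basic
      rintro u ⟨s₁, hs₁, s', hs', rfl⟩
      have hs₁Ω : MeasurableSet[mΩ] s₁ := h₁ _ hs₁
      have hs'Ω : MeasurableSet[mΩ] s' := hm' _ hs'
      have hι'sm : StronglyMeasurable[m'] (s'.indicator (fun _ => (1:ℝ))) :=
        (stronglyMeasurable_const : StronglyMeasurable[m'] (fun _ => (1:ℝ))).indicator hs'
      have hι'aesm : AEStronglyMeasurable (s'.indicator (fun _ => (1:ℝ))) μ :=
        (hι'sm.mono hm').aestronglyMeasurable
      have hι₁aesm : AEStronglyMeasurable (s₁.indicator (fun _ => (1:ℝ))) μ :=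
        ((stronglyMeasurable_const :
          StronglyMeasurable[mΩ] (fun _ => (1:ℝ))).indicator hs₁Ω).aestronglyMeasurable
      have hι₁int : Integrable (s₁.indicator (fun _ => (1:ℝ))) μ :=
        (integrable_const (1:ℝ)).indicator hs₁Ω
      have hXint : Integrable (fun ω => s'.indicator (fun _ => (1:ℝ)) ω
          * (μ[s₂.indicator (fun _ => (1:ℝ))|m']) ω) μ :=
        hWint.bdd_mul hι'aesm (Filter.Eventually.of_forall fun ω => by
          simpa [Real.norm_eq_abs] using abs_indicator_one_le' s' ω)
      have step1 : ∫ ω in s₁ ∩ s', (μ[s₂.indicator (fun _ => (1:ℝ))|m']) ω ∂μ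
          = ∫ ω, (s'.indicator (fun _ => (1:ℝ)) ω * (μ[s₂.indicator (fun _ => (1:ℝ))|m']) ω)
              * s₁.indicator (fun _ => (1:ℝ)) ω ∂μ := by
        rw [← integral_indicator (hs₁Ω.inter hs'Ω)]
        refine integral_congr_ae (Filter.Eventually.of_forall fun ω => ?_)
        by_cases hx1 : ω ∈ s₁ <;> by_cases hx2 : ω ∈ s' <;>
          simp [Set.indicator_apply, hx1, hx2]
      have step2 : ∫ ω, (s'.indicator (fun _ => (1:ℝ)) ω * (μ[s₂.indicator (fun _ => (1:ℝ))|m']) ω)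
              * s₁.indicator (fun _ => (1:ℝ)) ω ∂μ
          = ∫ ω, (s'.indicator (fun _ => (1:ℝ)) ω * (μ[s₂.indicator (fun _ => (1:ℝ))|m']) ω)
              * (μ[s₁.indicator (fun _ => (1:ℝ))|m']) ω ∂μ :=
        integral_mul_condexp hm' (hι'sm.mul hWsm)
          (hXint.mul_bdd hι₁aesm (Filter.Eventually.of_forall fun ω => abs_indicator_one_le' s₁ ω))
          hι₁int
      have hprod := (condIndep_iff m' m₁ m₂ hm' h₁ h₂ μ).mp hCI s₁ s₂ hs₁ hs₂
      have step3 : ∫ ω, (s'.indicator (fun _ => (1:ℝ)) ω * (μ[s₂.indicator (fun _ => (1:ℝ))|m']) ω)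
              * (μ[s₁.indicator (fun _ => (1:ℝ))|m']) ω ∂μ
          = ∫ ω, s'.indicator (fun _ => (1:ℝ)) ω
              * (μ[(s₁ ∩ s₂).indicator (fun _ => (1:ℝ))|m']) ω ∂μ := by
        refine integral_congr_ae (hprod.mono fun ω h => ?_)
        show s'.indicator (fun _ => (1:ℝ)) ω * (μ[s₂.indicator (fun _ => (1:ℝ))|m']) ω
              * (μ[s₁.indicator (fun _ => (1:ℝ))|m']) ω
            = s'.indicator (fun _ => (1:ℝ)) ω * (μ[(s₁ ∩ s₂).indicator (fun _ => (1:ℝ))|m']) ω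
        have h' : (μ[(s₁ ∩ s₂).indicator (fun _ => (1:ℝ))|m']) ω
            = (μ[s₁.indicator (fun _ => (1:ℝ))|m']) ω
              * (μ[s₂.indicator (fun _ => (1:ℝ))|m']) ω := h
        rw [h']; ring
      have step4 : ∫ ω, s'.indicator (fun _ => (1:ℝ)) ω
              * (μ[(s₁ ∩ s₂).indicator (fun _ => (1:ℝ))|m']) ω ∂μ
          = ∫ ω, s'.indicator (fun _ => (1:ℝ)) ω * (s₁ ∩ s₂).indicator (fun _ => (1:ℝ)) ω ∂μ := by
        refine (integral_mul_condexp hm' hι'sm ?_ ?_).symm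
        · exact ((integrable_const (1:ℝ)).indicator (hs₁Ω.inter (h₂ _ hs₂))).bdd_mul hι'aesm
            (Filter.Eventually.of_forall fun ω => by
              simpa [Real.norm_eq_abs] using abs_indicator_one_le' s' ω)
        · exact (integrable_const (1:ℝ)).indicator (hs₁Ω.inter (h₂ _ hs₂))
      have step5 : ∫ ω, s'.indicator (fun _ => (1:ℝ)) ω * (s₁ ∩ s₂).indicator (fun _ => (1:ℝ)) ω ∂μ
          = ∫ ω in s₁ ∩ s', s₂.indicator (fun _ => (1:ℝ)) ω ∂μ := by
        rw [← integral_indicator (hs₁Ω.inter hs'Ω)]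
        refine integral_congr_ae (Filter.Eventually.of_forall fun ω => ?_)
        by_cases hx1 : ω ∈ s₁ <;> by_cases hx2 : ω ∈ s' <;> by_cases hx3 : ω ∈ s₂ <;>
          simp [Set.indicator_apply, hx1, hx2, hx3]
      rw [step1, step2, step3, step4, step5]
    · -- compl
      intro t ht hC
      have htΩ : MeasurableSet[mΩ] t := hsup _ ht
      have h1 := integral_add_compl htΩ hWint
      have h2 := integral_add_compl htΩ hI₂int
      have htot : ∫ ω, (μ[s₂.indicator (fun _ => (1:ℝ))|m']) ω ∂μ
          = ∫ ω, s₂.indicator (fun _ => (1:ℝ)) ω ∂μ := integral_condExp hm'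
      linarith
    · -- iUnion
      intro f hdisj hmeas hC
      have hmΩf : ∀ i, MeasurableSet[mΩ] (f i) := fun i => hsup _ (hmeas i)
      rw [integral_iUnion hmΩf hdisj hWint.integrableOn,
        integral_iUnion hmΩf hdisj hI₂int.integrableOn]
      exact tsum_congr hC
  exact (ae_eq_condExp_of_forall_setIntegral_eq hsup hI₂int
    (fun s _ _ => hWint.integrableOn) (fun s hs _ => key s hs)
    ((hWsm.mono (le_sup_right : m' ≤ m₁ ⊔ m')).aestronglyMeasurable)).symm

end CondIndepLemmas

section CondIndepLemmas2

variable {Ω : Type*} {m' m₁ m₂ : MeasurableSpace Ω} {mΩ : MeasurableSpace Ω}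
  [StandardBorelSpace Ω] {μ : Measure Ω} [IsFiniteMeasure μ]

/-- Under conditional independence of `m₁` and `m₂` given `m'`, the conditional expectation of an
integrable `m₁ ⊔ m'`-measurable function given `m₂ ⊔ m'` equals that given `m'`. -/
lemma condexp_sup_of_condIndep (hm' : m' ≤ mΩ) (h₁ : m₁ ≤ mΩ) (h₂ : m₂ ≤ mΩ)
    (hCI : CondIndep m' m₁ m₂ hm' μ) {F : Ω → ℝ} (hF : Integrable F μ)
    (hFm : StronglyMeasurable[m₁ ⊔ m'] F) :
    μ[F | m₂ ⊔ m'] =ᵐ[μ] μ[F | m'] := by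
  haveI : IsFiniteMeasure (μ.trim hm') := isFiniteMeasure_trim hm'
  have hsup1 : m₁ ⊔ m' ≤ mΩ := sup_le h₁ hm'
  have hsup2 : m₂ ⊔ m' ≤ mΩ := sup_le h₂ hm'
  haveI : IsFiniteMeasure (μ.trim hsup1) := isFiniteMeasure_trim hsup1
  haveI : IsFiniteMeasure (μ.trim hsup2) := isFiniteMeasure_trim hsup2
  have hGsm : StronglyMeasurable[m'] (μ[F|m']) := stronglyMeasurable_condExp
  have hGint : Integrable (μ[F|m']) μ := integrable_condExp
  have hFaesm : AEStronglyMeasurable F μ := (hFm.mono hsup1).aestronglyMeasurable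
  have key : ∀ t, MeasurableSet[m₂ ⊔ m'] t →
      ∫ ω in t, (μ[F|m']) ω ∂μ = ∫ ω in t, F ω ∂μ := by
    refine MeasurableSpace.induction_on_inter (m := m₂ ⊔ m')
      (C := fun t _ => ∫ ω in t, (μ[F|m']) ω ∂μ = ∫ ω in t, F ω ∂μ)
      (sup_eq_generateFrom_inter m₂ m') (isPiSystem_inter_sets m₂ m') (by simp) ?_ ?_ ?_
    · -- basic
      rintro u ⟨s₂, hs₂, s', hs', rfl⟩
      have hs₂Ω : MeasurableSet[mΩ] s₂ := h₂ _ hs₂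
      have hs'Ω : MeasurableSet[mΩ] s' := hm' _ hs'
      have hι'sm : StronglyMeasurable[m'] (s'.indicator (fun _ => (1:ℝ))) :=
        (stronglyMeasurable_const : StronglyMeasurable[m'] (fun _ => (1:ℝ))).indicator hs'
      have hι'aesm : AEStronglyMeasurable (s'.indicator (fun _ => (1:ℝ))) μ :=
        (hι'sm.mono hm').aestronglyMeasurable
      have hι'bd : ∀ᵐ ω ∂μ, |s'.indicator (fun _ => (1:ℝ)) ω| ≤ 1 :=
        Filter.Eventually.of_forall fun ω => abs_indicator_one_le' s' ω
      have hι₂aesm : AEStronglyMeasurable (s₂.indicator (fun _ => (1:ℝ))) μ :=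
        ((stronglyMeasurable_const :
          StronglyMeasurable[mΩ] (fun _ => (1:ℝ))).indicator hs₂Ω).aestronglyMeasurable
      have hι₂bd : ∀ᵐ ω ∂μ, |s₂.indicator (fun _ => (1:ℝ)) ω| ≤ 1 :=
        Filter.Eventually.of_forall fun ω => abs_indicator_one_le' s₂ ω
      have hι₂int : Integrable (s₂.indicator (fun _ => (1:ℝ))) μ :=
        (integrable_const (1:ℝ)).indicator hs₂Ω
      have hWsm : StronglyMeasurable[m'] (μ[s₂.indicator (fun _ => (1:ℝ))|m']) :=
        stronglyMeasurable_condExp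
      have hWaesm : AEStronglyMeasurable (μ[s₂.indicator (fun _ => (1:ℝ))|m']) μ :=
        (hWsm.mono hm').aestronglyMeasurable
      have hWbd : ∀ᵐ ω ∂μ, |(μ[s₂.indicator (fun _ => (1:ℝ))|m']) ω| ≤ 1 :=
        abs_condexp_le_of_abs_le hm' hι₂int
          (Filter.Eventually.of_forall fun ω => abs_indicator_one_le' s₂ ω) one_pos.le
      have hN₀ := condexp_indicator_of_condIndep hm' h₁ h₂ hCI hs₂
      -- LHS chain
      have hXG : Integrable (fun ω => s'.indicator (fun _ => (1:ℝ)) ω * (μ[F|m']) ω) μ :=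
        hGint.bdd_mul hι'aesm (by simpa [Real.norm_eq_abs] using hι'bd)
      have L1 : ∫ ω in s₂ ∩ s', (μ[F|m']) ω ∂μ
          = ∫ ω, (s'.indicator (fun _ => (1:ℝ)) ω * (μ[F|m']) ω)
              * s₂.indicator (fun _ => (1:ℝ)) ω ∂μ := by
        rw [← integral_indicator (hs₂Ω.inter hs'Ω)]
        refine integral_congr_ae (Filter.Eventually.of_forall fun ω => ?_)
        by_cases hx1 : ω ∈ s₂ <;> by_cases hx2 : ω ∈ s' <;>
          simp [Set.indicator_apply, hx1, hx2]
      have L2 : ∫ ω, (s'.indicator (fun _ => (1:ℝ)) ω * (μ[F|m']) ω)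
              * s₂.indicator (fun _ => (1:ℝ)) ω ∂μ
          = ∫ ω, (s'.indicator (fun _ => (1:ℝ)) ω * (μ[F|m']) ω)
              * (μ[s₂.indicator (fun _ => (1:ℝ))|m']) ω ∂μ :=
        integral_mul_condexp hm' (hι'sm.mul hGsm) (hXG.mul_bdd hι₂aesm hι₂bd) hι₂int
      -- RHS chain
      have hXF : Integrable (fun ω => s'.indicator (fun _ => (1:ℝ)) ω * F ω) μ :=
        hF.bdd_mul hι'aesm (by simpa [Real.norm_eq_abs] using hι'bd)
      have hι'Fsm : StronglyMeasurable[m₁ ⊔ m'] (fun ω => s'.indicator (fun _ => (1:ℝ)) ω * F ω) :=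
        (((stronglyMeasurable_const : StronglyMeasurable[m₁ ⊔ m'] (fun _ => (1:ℝ))).indicator
          ((le_sup_right : m' ≤ m₁ ⊔ m') _ hs')).mul hFm)
      have R1 : ∫ ω in s₂ ∩ s', F ω ∂μ
          = ∫ ω, (s'.indicator (fun _ => (1:ℝ)) ω * F ω)
              * s₂.indicator (fun _ => (1:ℝ)) ω ∂μ := by
        rw [← integral_indicator (hs₂Ω.inter hs'Ω)]
        refine integral_congr_ae (Filter.Eventually.of_forall fun ω => ?_)
        by_cases hx1 : ω ∈ s₂ <;> by_cases hx2 : ω ∈ s' <;>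
          simp [Set.indicator_apply, hx1, hx2]
      have R2 : ∫ ω, (s'.indicator (fun _ => (1:ℝ)) ω * F ω)
              * s₂.indicator (fun _ => (1:ℝ)) ω ∂μ
          = ∫ ω, (s'.indicator (fun _ => (1:ℝ)) ω * F ω)
              * (μ[s₂.indicator (fun _ => (1:ℝ))|m₁ ⊔ m']) ω ∂μ :=
        integral_mul_condexp hsup1 hι'Fsm (hXF.mul_bdd hι₂aesm hι₂bd) hι₂int
      have R3 : ∫ ω, (s'.indicator (fun _ => (1:ℝ)) ω * F ω)
              * (μ[s₂.indicator (fun _ => (1:ℝ))|m₁ ⊔ m']) ω ∂μ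
          = ∫ ω, (s'.indicator (fun _ => (1:ℝ)) ω * (μ[s₂.indicator (fun _ => (1:ℝ))|m']) ω)
              * F ω ∂μ := by
        refine integral_congr_ae (hN₀.mono fun ω h => ?_)
        show s'.indicator (fun _ => (1:ℝ)) ω * F ω * (μ[s₂.indicator (fun _ => (1:ℝ))|m₁ ⊔ m']) ω
          = s'.indicator (fun _ => (1:ℝ)) ω * (μ[s₂.indicator (fun _ => (1:ℝ))|m']) ω * F ω
        rw [h]; ring
      have R4 : ∫ ω, (s'.indicator (fun _ => (1:ℝ)) ω * (μ[s₂.indicator (fun _ => (1:ℝ))|m']) ω)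
              * F ω ∂μ
          = ∫ ω, (s'.indicator (fun _ => (1:ℝ)) ω * (μ[s₂.indicator (fun _ => (1:ℝ))|m']) ω)
              * (μ[F|m']) ω ∂μ := by
        refine integral_mul_condexp hm' (hι'sm.mul hWsm) ?_ hF
        have : Integrable (fun ω => F ω * (s'.indicator (fun _ => (1:ℝ)) ω
            * (μ[s₂.indicator (fun _ => (1:ℝ))|m']) ω)) μ := by
          refine hF.mul_bdd (c := 1) (hι'aesm.mul hWaesm) ?_
          filter_upwards [hι'bd, hWbd] with ω h1 h2
          rw [Real.norm_eq_abs, abs_mul]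
          exact mul_le_one₀ h1 (abs_nonneg _) h2
        exact this.congr (Filter.Eventually.of_forall fun ω => by ring)
      rw [L1, L2, R1, R2, R3, R4]
      refine integral_congr_ae (Filter.Eventually.of_forall fun ω => ?_)
      ring
    · -- compl
      intro t ht hC
      have htΩ : MeasurableSet[mΩ] t := hsup2 _ ht
      have h1 := integral_add_compl htΩ hGint
      have h2 := integral_add_compl htΩ hF
      have htot : ∫ ω, (μ[F|m']) ω ∂μ = ∫ ω, F ω ∂μ := integral_condExp hm'
      linarith
    · -- iUnion
      intro f hdisj hmeas hC
      have hmΩf : ∀ i, MeasurableSet[mΩ] (f i) := fun i => hsup2 _ (hmeas i)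
      rw [integral_iUnion hmΩf hdisj hGint.integrableOn,
        integral_iUnion hmΩf hdisj hF.integrableOn]
      exact tsum_congr hC
  exact (ae_eq_condExp_of_forall_setIntegral_eq hsup2 hF
    (fun s _ _ => hGint.integrableOn) (fun s hs _ => key s hs)
    ((hGsm.mono (le_sup_right : m' ≤ m₂ ⊔ m')).aestronglyMeasurable)).symm

/-- Conditional product formula under conditional independence. -/
lemma condexp_mul_of_condIndep (hm' : m' ≤ mΩ) (h₁ : m₁ ≤ mΩ) (h₂ : m₂ ≤ mΩ)
    (hCI : CondIndep m' m₁ m₂ hm' μ) {F H : Ω → ℝ} {C : ℝ}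
    (hF : Integrable F μ) (hFm : StronglyMeasurable[m₁ ⊔ m'] F)
    (hHm : StronglyMeasurable[m₂ ⊔ m'] H) (hHbd : ∀ᵐ ω ∂μ, |H ω| ≤ C) :
    μ[(fun ω => F ω * H ω) | m'] =ᵐ[μ] μ[F|m'] * μ[H|m'] := by
  haveI : IsFiniteMeasure (μ.trim hm') := isFiniteMeasure_trim hm'
  have hsup2 : m₂ ⊔ m' ≤ mΩ := sup_le h₂ hm'
  haveI : IsFiniteMeasure (μ.trim hsup2) := isFiniteMeasure_trim hsup2
  have hHaesm : AEStronglyMeasurable H μ := (hHm.mono hsup2).aestronglyMeasurable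
  have hHint : Integrable H μ := integrable_of_ae_bdd hHaesm hHbd
  have hHF : Integrable (fun ω => H ω * F ω) μ :=
    hF.bdd_mul hHaesm (by simpa [Real.norm_eq_abs] using hHbd)
  have t1 : μ[(fun ω => F ω * H ω)|m'] =ᵐ[μ] μ[μ[(fun ω => F ω * H ω)|m₂ ⊔ m']|m'] :=
    (condExp_condExp_of_le (le_sup_right : m' ≤ m₂ ⊔ m') hsup2).symm
  have t2 : μ[(fun ω => F ω * H ω)|m₂ ⊔ m'] =ᵐ[μ] fun ω => H ω * (μ[F|m']) ω := by
    have hpull := condExp_mul_of_stronglyMeasurable_left (μ := μ) hHm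
      (show Integrable (H * F) μ from hHF) hF
    have hcomm : μ[(fun ω => F ω * H ω)|m₂ ⊔ m'] =ᵐ[μ] μ[H * F|m₂ ⊔ m'] :=
      condExp_congr_ae (Filter.Eventually.of_forall fun ω => mul_comm _ _)
    have t3 : μ[F|m₂ ⊔ m'] =ᵐ[μ] μ[F|m'] := condexp_sup_of_condIndep hm' h₁ h₂ hCI hF hFm
    refine (hcomm.trans hpull).trans ?_
    filter_upwards [t3] with ω h
    show H ω * (μ[F|m₂ ⊔ m']) ω = H ω * (μ[F|m']) ω
    rw [h]
  have t5 : μ[μ[(fun ω => F ω * H ω)|m₂ ⊔ m']|m'] =ᵐ[μ] μ[(fun ω => H ω * (μ[F|m']) ω)|m'] :=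
    condExp_congr_ae t2
  have t6 : μ[(fun ω => H ω * (μ[F|m']) ω)|m'] =ᵐ[μ] μ[F|m'] * μ[H|m'] := by
    have hint : Integrable (fun ω => (μ[F|m']) ω * H ω) μ :=
      integrable_condExp.mul_bdd hHaesm hHbd
    have hpull := condExp_mul_of_stronglyMeasurable_left (μ := μ)
      (stronglyMeasurable_condExp : StronglyMeasurable[m'] (μ[F|m']))
      (show Integrable (μ[F|m'] * H) μ from hint) hHint
    have hcomm : μ[(fun ω => H ω * (μ[F|m']) ω)|m'] =ᵐ[μ] μ[μ[F|m'] * H|m'] :=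
      condExp_congr_ae (Filter.Eventually.of_forall fun ω => mul_comm _ _)
    exact hcomm.trans hpull
  exact (t1.trans t5).trans t6

end CondIndepLemmas2

section Clamp

lemma abs_clamp_le {t : ℝ} (ht : 0 ≤ t) (x : ℝ) : |max (-t) (min t x)| ≤ t := by
  rw [abs_le]
  constructor
  · exact le_max_left _ _
  · exact max_le (by linarith) (min_le_left _ _)

lemma clamp_add_mem {x y t : ℝ} (ht : 1 ≤ t) (h0 : 0 ≤ x + y) (h1 : x + y ≤ 1) :
    0 ≤ max (-t) (min t x) + max (-t) (min t y) ∧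
      max (-t) (min t x) + max (-t) (min t y) ≤ 1 := by
  refine ⟨?_, ?_⟩ <;> (simp only [min_def, max_def]; split_ifs <;> linarith)

lemma clamp_eq_self {x t : ℝ} (h : |x| ≤ t) : max (-t) (min t x) = x := by
  rw [abs_le] at h
  rw [min_eq_right h.2, max_eq_right h.1]

end Clamp

/-- (AIV identification of the mean potential outcome.) Under consistency,
latent ignorability `Y(a) ⊥ (A,Z) | (U,L)`, IV independence `Z ⊥ U | L`, the additive IV
condition `P(A=a|Z,U,L) = b(U,L) + c(Z,L)`, and an RWF `π`,
`E[Y(a)] = E[ Cov(1{A=a}·Y, π(Z,L)|L) / Cov(1{A=a}, π(Z,L)|L) ]`. -/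
theorem stmt8 {Ω : Type*} [mΩ : MeasurableSpace Ω] [StandardBorelSpace Ω]
    (μ : Measure Ω) [IsProbabilityMeasure μ]
    (A Y Z U L Ya : Ω → ℝ) (a : ℝ)
    (hA : Measurable A) (hY : Measurable Y) (hZ : Measurable Z) (hU : Measurable U)
    (hL : Measurable L) (hYa : Measurable Ya)
    (B : Ω → ℝ) (hB : B = fun ω => if A ω = a then (1 : ℝ) else 0)
    -- (i) consistency: `Y = Y(a)` on `{A = a}`
    (hcons : ∀ ω, A ω = a → Y ω = Ya ω)
    -- (ii) latent ignorability: `Y(a) ⊥ (A,Z) | (U,L)`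
    (hLI : CondIndepFun (mV U ⊔ mV L)
      (sup_le (measurable_iff_comap_le.mp hU) (measurable_iff_comap_le.mp hL))
      Ya (fun ω => (A ω, Z ω)) μ)
    -- (iii) IV independence: `Z ⊥ U | L`
    (hZU : CondIndepFun (mV L) (measurable_iff_comap_le.mp hL) Z U μ)
    -- (iv) additive IV: `P(A=a | Z,U,L) = b(U,L) + c(Z,L)`
    (b c : ℝ → ℝ → ℝ)
    (hb : Measurable fun p : ℝ × ℝ => b p.1 p.2)
    (hc : Measurable fun p : ℝ × ℝ => c p.1 p.2)
    (hAIV : μ[B | mV Z ⊔ mV U ⊔ mV L]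
      =ᵐ[μ] fun ω => b (U ω) (L ω) + c (Z ω) (L ω))
    -- (v) `π` bounded with nonvanishing conditional covariance with `1{A=a}`
    (π : ℝ → ℝ → ℝ) (hπ : Measurable fun p : ℝ × ℝ => π p.1 p.2)
    (Cπ : ℝ) (hπbd : ∀ z l, |π z l| ≤ Cπ)
    (hcov : ∀ᵐ ω ∂μ,
      condCov μ (mV L) B (fun ω' => π (Z ω') (L ω')) ω ≠ 0)
    -- integrability
    (hintYa : Integrable Ya μ)
    (hintBY : Integrable (fun ω => B ω * Y ω) μ)
    (hintratio : Integrable (fun ω =>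
      condCov μ (mV L) (fun ω' => B ω' * Y ω') (fun ω' => π (Z ω') (L ω')) ω /
        condCov μ (mV L) B (fun ω' => π (Z ω') (L ω')) ω) μ) :
    ∫ ω, Ya ω ∂μ
      = ∫ ω,
          condCov μ (mV L) (fun ω' => B ω' * Y ω') (fun ω' => π (Z ω') (L ω')) ω /
            condCov μ (mV L) B (fun ω' => π (Z ω') (L ω')) ω ∂μ := by
  classical
  -- σ-algebra inequalities
  have hmL : mV L ≤ mΩ := hL.comap_le
  have hmU : mV U ≤ mΩ := hU.comap_le
  have hmZ : mV Z ≤ mΩ := hZ.comap_le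
  have hm2 : mV U ⊔ mV L ≤ mΩ := sup_le hmU hmL
  have hmZ2 : mV Z ⊔ mV L ≤ mΩ := sup_le hmZ hmL
  have hm3 : mV Z ⊔ mV U ⊔ mV L ≤ mΩ := sup_le (sup_le hmZ hmU) hmL
  have hpair : Measurable (fun ω => (A ω, Z ω)) := hA.prodMk hZ
  have hmP : mV (fun ω => (A ω, Z ω)) ≤ mΩ := hpair.comap_le
  have hmbig : mV (fun ω => (A ω, Z ω)) ⊔ (mV U ⊔ mV L) ≤ mΩ := sup_le hmP hm2
  have hL_le_m2 : mV L ≤ mV U ⊔ mV L := le_sup_right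
  have hL_le_m3 : mV L ≤ mV Z ⊔ mV U ⊔ mV L := le_sup_right
  have hm2_le_m3 : mV U ⊔ mV L ≤ mV Z ⊔ mV U ⊔ mV L :=
    sup_le ((le_sup_right : mV U ≤ mV Z ⊔ mV U).trans le_sup_left) le_sup_right
  have hmZ2_le_m3 : mV Z ⊔ mV L ≤ mV Z ⊔ mV U ⊔ mV L :=
    sup_le ((le_sup_left : mV Z ≤ mV Z ⊔ mV U).trans le_sup_left) le_sup_right
  have hZ_le_P : mV Z ≤ mV (fun ω => (A ω, Z ω)) := by
    have h1 : mV Z = MeasurableSpace.comap (fun ω => (A ω, Z ω))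
        (MeasurableSpace.comap Prod.snd inferInstance) := by
      rw [MeasurableSpace.comap_comp]
      rfl
    rw [h1]
    exact MeasurableSpace.comap_mono measurable_snd.comap_le
  have hm3_le_big : mV Z ⊔ mV U ⊔ mV L ≤ mV (fun ω => (A ω, Z ω)) ⊔ (mV U ⊔ mV L) :=
    sup_le (sup_le (hZ_le_P.trans le_sup_left)
      ((le_sup_left : mV U ≤ mV U ⊔ mV L).trans le_sup_right))
      ((le_sup_right : mV L ≤ mV U ⊔ mV L).trans le_sup_right)
  haveI : IsFiniteMeasure (μ.trim hmL) := isFiniteMeasure_trim hmL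
  haveI : IsFiniteMeasure (μ.trim hm2) := isFiniteMeasure_trim hm2
  haveI : IsFiniteMeasure (μ.trim hm3) := isFiniteMeasure_trim hm3
  haveI : IsFiniteMeasure (μ.trim hmbig) := isFiniteMeasure_trim hmbig
  -- measurability of coordinates w.r.t. sub-σ-algebras
  have hL_mL : Measurable[mV L] L := Measurable.of_comap_le le_rfl
  have hU_mU : Measurable[mV U] U := Measurable.of_comap_le le_rfl
  have hZ_mZ : Measurable[mV Z] Z := Measurable.of_comap_le le_rfl
  have hU_m2 : Measurable[mV U ⊔ mV L] U := hU_mU.mono le_sup_left le_rfl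
  have hL_m2 : Measurable[mV U ⊔ mV L] L := hL_mL.mono le_sup_right le_rfl
  have hZ_mZ2 : Measurable[mV Z ⊔ mV L] Z := hZ_mZ.mono le_sup_left le_rfl
  have hL_mZ2 : Measurable[mV Z ⊔ mV L] L := hL_mL.mono le_sup_right le_rfl
  -- B facts
  have hB0 : ∀ ω, 0 ≤ B ω := by intro ω; rw [hB]; dsimp only; split <;> norm_num
  have hB1 : ∀ ω, B ω ≤ 1 := by intro ω; rw [hB]; dsimp only; split <;> norm_num
  have hBabs : ∀ ω, |B ω| ≤ 1 := fun ω => abs_le.mpr ⟨by linarith [hB0 ω], hB1 ω⟩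
  have hBmeas : Measurable B := by
    rw [hB]
    exact Measurable.ite (hA (measurableSet_singleton a)) measurable_const measurable_const
  have hBint : Integrable B μ :=
    integrable_of_ae_bdd hBmeas.aestronglyMeasurable (Filter.Eventually.of_forall hBabs)
  have hB_mP : Measurable[mV (fun ω => (A ω, Z ω))] B := by
    rw [hB]
    have hfst : Measurable fun p : ℝ × ℝ => (if p.1 = a then (1:ℝ) else 0) :=
      Measurable.ite (measurable_fst (measurableSet_singleton a))
        measurable_const measurable_const
    exact hfst.comp (Measurable.of_comap_le le_rfl)
  have hB_mbig : Measurable[mV (fun ω => (A ω, Z ω)) ⊔ (mV U ⊔ mV L)] B :=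
    hB_mP.mono le_sup_left le_rfl
  -- consistency
  have hBY_eq : ∀ ω, B ω * Y ω = B ω * Ya ω := by
    intro ω
    rw [hB]
    dsimp only
    by_cases h : A ω = a
    · simp [h, hcons ω h]
    · simp [h]
  have hintBYa : Integrable (fun ω => B ω * Ya ω) μ :=
    hintBY.congr (Filter.Eventually.of_forall fun ω => hBY_eq ω)
  -- conditional independence, σ-algebra form
  have hCI_LI : CondIndep (mV U ⊔ mV L) (mV Ya) (mV (fun ω => (A ω, Z ω)))
      (sup_le (measurable_iff_comap_le.mp hU) (measurable_iff_comap_le.mp hL)) μ :=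
    (condIndepFun_iff_condIndep _ _ Ya (fun ω => (A ω, Z ω)) μ).mp hLI
  have hCI_ZU : CondIndep (mV L) (mV U) (mV Z) (measurable_iff_comap_le.mp hL) μ :=
    (condIndepFun_iff_condIndep _ _ U Z μ).mp hZU.symm
  -- Step A: E[Ya | σ(A,Z) ⊔ σ(U,L)] = E[Ya | σ(U,L)]
  have hYa_sm : StronglyMeasurable[mV Ya ⊔ (mV U ⊔ mV L)] Ya :=
    ((Measurable.of_comap_le le_rfl : Measurable[mV Ya] Ya).mono
      (le_sup_left : mV Ya ≤ mV Ya ⊔ (mV U ⊔ mV L)) le_rfl).stronglyMeasurable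
  have hstepA : μ[Ya | mV (fun ω => (A ω, Z ω)) ⊔ (mV U ⊔ mV L)] =ᵐ[μ] μ[Ya | mV U ⊔ mV L] :=
    condexp_sup_of_condIndep hm2 (hYa.comap_le) hmP hCI_LI hintYa hYa_sm
  -- gg = E[Ya | σ(U,L)]
  have hgg_sm : StronglyMeasurable[mV U ⊔ mV L] (μ[Ya | mV U ⊔ mV L]) :=
    stronglyMeasurable_condExp
  have hgg_int : Integrable (μ[Ya | mV U ⊔ mV L]) μ := integrable_condExp
  have hgg_aesm : AEStronglyMeasurable (μ[Ya | mV U ⊔ mV L]) μ :=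
    (hgg_sm.mono hm2).aestronglyMeasurable
  -- Step B: pull out B
  have hstepB : μ[(fun ω => B ω * Ya ω) | mV (fun ω => (A ω, Z ω)) ⊔ (mV U ⊔ mV L)]
      =ᵐ[μ] fun ω => B ω * (μ[Ya | mV U ⊔ mV L]) ω := by
    have hpull := condExp_mul_of_stronglyMeasurable_left (μ := μ) hB_mbig.stronglyMeasurable
      (show Integrable (B * Ya) μ from hintBYa) hintYa
    refine hpull.trans ?_
    filter_upwards [hstepA] with ω h
    show B ω * (μ[Ya | mV (fun ω => (A ω, Z ω)) ⊔ (mV U ⊔ mV L)]) ω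
      = B ω * (μ[Ya | mV U ⊔ mV L]) ω
    rw [h]
  -- Step C: E[BY | σ(Z,U,L)] = g ⬝ (b + c)
  have hgg_sm3 : StronglyMeasurable[mV Z ⊔ mV U ⊔ mV L] (μ[Ya | mV U ⊔ mV L]) :=
    hgg_sm.mono hm2_le_m3
  have hBY3 : μ[(fun ω => B ω * Y ω) | mV Z ⊔ mV U ⊔ mV L]
      =ᵐ[μ] fun ω => (μ[Ya | mV U ⊔ mV L]) ω * (b (U ω) (L ω) + c (Z ω) (L ω)) := by
    have e1 : μ[(fun ω => B ω * Y ω) | mV Z ⊔ mV U ⊔ mV L]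
        =ᵐ[μ] μ[(fun ω => B ω * Ya ω) | mV Z ⊔ mV U ⊔ mV L] :=
      condExp_congr_ae (Filter.Eventually.of_forall fun ω => hBY_eq ω)
    have e2 : μ[(fun ω => B ω * Ya ω) | mV Z ⊔ mV U ⊔ mV L]
        =ᵐ[μ] μ[μ[(fun ω => B ω * Ya ω) | mV (fun ω => (A ω, Z ω)) ⊔ (mV U ⊔ mV L)]
            | mV Z ⊔ mV U ⊔ mV L] :=
      (condExp_condExp_of_le hm3_le_big hmbig).symm
    have e3 : μ[μ[(fun ω => B ω * Ya ω) | mV (fun ω => (A ω, Z ω)) ⊔ (mV U ⊔ mV L)]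
            | mV Z ⊔ mV U ⊔ mV L]
        =ᵐ[μ] μ[(fun ω => (μ[Ya | mV U ⊔ mV L]) ω * B ω) | mV Z ⊔ mV U ⊔ mV L] :=
      condExp_congr_ae (hstepB.trans
        (Filter.Eventually.of_forall fun ω => mul_comm _ _))
    have hggB_int : Integrable (fun ω => (μ[Ya | mV U ⊔ mV L]) ω * B ω) μ :=
      hgg_int.mul_bdd hBmeas.aestronglyMeasurable (Filter.Eventually.of_forall hBabs)
    have e4 := condExp_mul_of_stronglyMeasurable_left (μ := μ) hgg_sm3
      (show Integrable (μ[Ya | mV U ⊔ mV L] * B) μ from hggB_int) hBint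
    have e5 : (μ[Ya | mV U ⊔ mV L]) * μ[B | mV Z ⊔ mV U ⊔ mV L]
        =ᵐ[μ] fun ω => (μ[Ya | mV U ⊔ mV L]) ω * (b (U ω) (L ω) + c (Z ω) (L ω)) := by
      filter_upwards [hAIV] with ω h
      show (μ[Ya | mV U ⊔ mV L]) ω * (μ[B | mV Z ⊔ mV U ⊔ mV L]) ω = _
      rw [h]
    exact (((e1.trans e2).trans e3).trans e4).trans e5
  -- bc facts
  have hbc_m3 : Measurable[mV Z ⊔ mV U ⊔ mV L] (fun ω => b (U ω) (L ω) + c (Z ω) (L ω)) := by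
    have hU3 : Measurable[mV Z ⊔ mV U ⊔ mV L] U :=
      hU_mU.mono ((le_sup_right : mV U ≤ mV Z ⊔ mV U).trans le_sup_left) le_rfl
    have hZ3 : Measurable[mV Z ⊔ mV U ⊔ mV L] Z :=
      hZ_mZ.mono ((le_sup_left : mV Z ≤ mV Z ⊔ mV U).trans le_sup_left) le_rfl
    have hL3 : Measurable[mV Z ⊔ mV U ⊔ mV L] L := hL_mL.mono hL_le_m3 le_rfl
    exact (hb.comp (hU3.prodMk hL3)).add (hc.comp (hZ3.prodMk hL3))
  have hbc_meas : Measurable (fun ω => b (U ω) (L ω) + c (Z ω) (L ω)) :=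
    hbc_m3.mono hm3 le_rfl
  have hbc_int : Integrable (fun ω => b (U ω) (L ω) + c (Z ω) (L ω)) μ :=
    integrable_condExp.congr hAIV
  have hbc01 : ∀ᵐ ω ∂μ, 0 ≤ b (U ω) (L ω) + c (Z ω) (L ω)
      ∧ b (U ω) (L ω) + c (Z ω) (L ω) ≤ 1 := by
    have h0 : 0 ≤ᵐ[μ] μ[B | mV Z ⊔ mV U ⊔ mV L] :=
      condExp_nonneg (Filter.Eventually.of_forall hB0)
    have h1 : μ[B | mV Z ⊔ mV U ⊔ mV L] ≤ᵐ[μ] μ[(fun _ => (1:ℝ)) | mV Z ⊔ mV U ⊔ mV L] :=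
      condExp_mono hBint (integrable_const 1) (Filter.Eventually.of_forall hB1)
    rw [condExp_const (μ := μ) hm3 (1:ℝ)] at h1
    filter_upwards [h0, h1, hAIV] with ω g0 g1 g2
    rw [← g2]
    exact ⟨g0, g1⟩
  have hbc_bd : ∀ᵐ ω ∂μ, |b (U ω) (L ω) + c (Z ω) (L ω)| ≤ 1 :=
    hbc01.mono fun ω h => abs_le.mpr ⟨by linarith [h.1], h.2⟩
  -- π' facts
  have hCπ0 : 0 ≤ Cπ := le_trans (abs_nonneg _) (hπbd 0 0)
  have hπ'_mZ2 : Measurable[mV Z ⊔ mV L] (fun ω => π (Z ω) (L ω)) :=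
    hπ.comp (hZ_mZ2.prodMk hL_mZ2)
  have hπ'_meas : Measurable (fun ω => π (Z ω) (L ω)) := hπ.comp (hZ.prodMk hL)
  have hπ'_int : Integrable (fun ω => π (Z ω) (L ω)) μ :=
    integrable_of_ae_bdd hπ'_meas.aestronglyMeasurable
      (Filter.Eventually.of_forall fun ω => hπbd _ _)
  -- q = E[π'|σ(L)]
  have hq_sm : StronglyMeasurable[mV L] (μ[(fun ω' => π (Z ω') (L ω')) | mV L]) :=
    stronglyMeasurable_condExp
  have hq_int : Integrable (μ[(fun ω' => π (Z ω') (L ω')) | mV L]) μ := integrable_condExp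
  have hq_aesm : AEStronglyMeasurable (μ[(fun ω' => π (Z ω') (L ω')) | mV L]) μ :=
    (hq_sm.mono hmL).aestronglyMeasurable
  have hq_bd : ∀ᵐ ω ∂μ, |(μ[(fun ω' => π (Z ω') (L ω')) | mV L]) ω| ≤ Cπ :=
    abs_condexp_le_of_abs_le hmL hπ'_int (Filter.Eventually.of_forall fun ω => hπbd _ _) hCπ0
  -- π̃ (centered π')
  set pit : Ω → ℝ := fun ω => π (Z ω) (L ω) - (μ[(fun ω' => π (Z ω') (L ω')) | mV L]) ω
    with hpit_def
  have hpit_smZ2 : StronglyMeasurable[mV Z ⊔ mV L] pit :=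
    hπ'_mZ2.stronglyMeasurable.sub (hq_sm.mono (le_sup_right : mV L ≤ mV Z ⊔ mV L))
  have hpit_sm3 : StronglyMeasurable[mV Z ⊔ mV U ⊔ mV L] pit := hpit_smZ2.mono hmZ2_le_m3
  have hpit_aesm : AEStronglyMeasurable pit μ := (hpit_smZ2.mono hmZ2).aestronglyMeasurable
  have hpit_bd : ∀ᵐ ω ∂μ, |pit ω| ≤ 2 * Cπ := by
    filter_upwards [hq_bd] with ω h
    have h2 : |π (Z ω) (L ω)| ≤ Cπ := hπbd _ _
    rw [hpit_def]
    dsimp only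
    rw [sub_eq_add_neg]
    refine (abs_add_le _ _).trans ?_
    rw [abs_neg]
    linarith
  have hpit0 : μ[pit | mV L] =ᵐ[μ] fun _ => (0:ℝ) := by
    have hsub := condExp_sub (μ := μ) (m := mV L) hπ'_int hq_int
    have hqq : μ[(μ[(fun ω' => π (Z ω') (L ω')) | mV L]) | mV L]
        = μ[(fun ω' => π (Z ω') (L ω')) | mV L] :=
      condExp_of_stronglyMeasurable hmL hq_sm hq_int
    refine Filter.EventuallyEq.trans (show μ[pit | mV L] =ᵐ[μ] _ from hsub) ?_
    rw [hqq]
    filter_upwards with ω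
    show (μ[(fun ω' => π (Z ω') (L ω')) | mV L]) ω
        - (μ[(fun ω' => π (Z ω') (L ω')) | mV L]) ω = 0
    ring
  -- conditional covariance vs. centered conditional expectation
  have covred : ∀ X : Ω → ℝ, Integrable X μ →
      Integrable (fun ω => X ω * π (Z ω) (L ω)) μ →
      condCov μ (mV L) X (fun ω' => π (Z ω') (L ω'))
        =ᵐ[μ] μ[(fun ω => X ω * pit ω) | mV L] := by
    intro X hX hXπ
    have hXq : Integrable (fun ω => X ω * (μ[(fun ω' => π (Z ω') (L ω')) | mV L]) ω) μ :=
      hX.mul_bdd hq_aesm hq_bd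
    have hsplit : μ[(fun ω => X ω * pit ω) | mV L]
        =ᵐ[μ] μ[(fun ω => X ω * π (Z ω) (L ω)) | mV L]
          - μ[(fun ω => X ω * (μ[(fun ω' => π (Z ω') (L ω')) | mV L]) ω) | mV L] := by
      refine Filter.EventuallyEq.trans ?_ (condExp_sub hXπ hXq (mV L))
      refine condExp_congr_ae (Filter.Eventually.of_forall fun ω => ?_)
      show X ω * pit ω
          = X ω * π (Z ω) (L ω) - X ω * (μ[(fun ω' => π (Z ω') (L ω')) | mV L]) ω
      rw [hpit_def]; ring
    have hpullq := condExp_mul_of_stronglyMeasurable_left (μ := μ) hq_sm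
      (show Integrable (μ[(fun ω' => π (Z ω') (L ω')) | mV L] * X) μ from
        hXq.congr (Filter.Eventually.of_forall fun ω => mul_comm _ _)) hX
    have hqX : μ[(fun ω => X ω * (μ[(fun ω' => π (Z ω') (L ω')) | mV L]) ω) | mV L]
        =ᵐ[μ] μ[(fun ω' => π (Z ω') (L ω')) | mV L] * μ[X | mV L] :=
      (condExp_congr_ae (Filter.Eventually.of_forall fun ω => mul_comm _ _)).trans hpullq
    filter_upwards [hsplit, hqX] with ω h1 h2
    show (μ[(fun ω => X ω * π (Z ω) (L ω)) | mV L]) ω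
        - (μ[X | mV L]) ω * (μ[(fun ω' => π (Z ω') (L ω')) | mV L]) ω
      = (μ[(fun ω => X ω * pit ω) | mV L]) ω
    have h1' : (μ[(fun ω => X ω * pit ω) | mV L]) ω
        = (μ[(fun ω => X ω * π (Z ω) (L ω)) | mV L]) ω
          - (μ[(fun ω => X ω * (μ[(fun ω' => π (Z ω') (L ω')) | mV L]) ω) | mV L]) ω := h1
    have h2' : (μ[(fun ω => X ω * (μ[(fun ω' => π (Z ω') (L ω')) | mV L]) ω) | mV L]) ω
        = (μ[(fun ω' => π (Z ω') (L ω')) | mV L]) ω * (μ[X | mV L]) ω := h2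
    rw [h1', h2']
    ring
  -- clamped versions of b and c
  set bn : ℕ → Ω → ℝ := fun n ω => max (-((n:ℝ)+1)) (min ((n:ℝ)+1) (b (U ω) (L ω)))
    with hbn_def
  set cn : ℕ → Ω → ℝ := fun n ω => max (-((n:ℝ)+1)) (min ((n:ℝ)+1) (c (Z ω) (L ω)))
    with hcn_def
  have hclamp_meas : ∀ n : ℕ, Measurable fun x : ℝ => max (-((n:ℝ)+1)) (min ((n:ℝ)+1) x) :=
    fun n => measurable_const.max (measurable_const.min measurable_id)
  have hbn_m2 : ∀ n, Measurable[mV U ⊔ mV L] (bn n) := fun n =>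
    (hclamp_meas n).comp (hb.comp (hU_m2.prodMk hL_m2))
  have hcn_mZ2 : ∀ n, Measurable[mV Z ⊔ mV L] (cn n) := fun n =>
    (hclamp_meas n).comp (hc.comp (hZ_mZ2.prodMk hL_mZ2))
  have hbn_bd : ∀ (n : ℕ) ω, |bn n ω| ≤ (n:ℝ)+1 := fun n ω =>
    abs_clamp_le (by positivity) _
  have hcn_bd : ∀ (n : ℕ) ω, |cn n ω| ≤ (n:ℝ)+1 := fun n ω =>
    abs_clamp_le (by positivity) _
  have hbn_aesm : ∀ n, AEStronglyMeasurable (bn n) μ := fun n =>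
    ((hbn_m2 n).mono hm2 le_rfl).aestronglyMeasurable
  have hcn_aesm : ∀ n, AEStronglyMeasurable (cn n) μ := fun n =>
    ((hcn_mZ2 n).mono hmZ2 le_rfl).aestronglyMeasurable
  have hbn_int : ∀ n, Integrable (bn n) μ := fun n =>
    integrable_of_ae_bdd (hbn_aesm n) (Filter.Eventually.of_forall (hbn_bd n))
  have hone_le : ∀ n : ℕ, (1:ℝ) ≤ (n:ℝ) + 1 := fun n => by
    have : (0:ℝ) ≤ (n:ℝ) := Nat.cast_nonneg n
    linarith
  have hhn01 : ∀ n, ∀ᵐ ω ∂μ, 0 ≤ bn n ω + cn n ω ∧ bn n ω + cn n ω ≤ 1 := fun n =>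
    hbc01.mono fun ω h => clamp_add_mem (hone_le n) h.1 h.2
  have htend : ∀ ω, Filter.Tendsto (fun n : ℕ => bn n ω + cn n ω) Filter.atTop
      (nhds (b (U ω) (L ω) + c (Z ω) (L ω))) := by
    intro ω
    apply tendsto_atTop_of_eventually_const
      (i₀ := ⌈max |b (U ω) (L ω)| |c (Z ω) (L ω)|⌉₊)
    intro n hn
    have hmax : max |b (U ω) (L ω)| |c (Z ω) (L ω)| ≤ (n:ℝ) + 1 := by
      refine le_trans (Nat.le_ceil _) ?_
      have h' : (⌈max |b (U ω) (L ω)| |c (Z ω) (L ω)|⌉₊ : ℝ) ≤ (n:ℝ) := Nat.cast_le.mpr hn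
      linarith
    rw [hbn_def, hcn_def]
    dsimp only
    rw [clamp_eq_self (le_trans (le_max_left _ _) hmax),
      clamp_eq_self (le_trans (le_max_right _ _) hmax)]
  -- per-n conditional product identity
  have hpit2C : (0:ℝ) ≤ 2 * Cπ := by linarith
  have hJn : ∀ n, μ[(fun ω => (μ[Ya | mV U ⊔ mV L]) ω * ((bn n ω + cn n ω) * pit ω)) | mV L]
      =ᵐ[μ] μ[μ[Ya | mV U ⊔ mV L] | mV L]
        * μ[(fun ω => (bn n ω + cn n ω) * pit ω) | mV L] := by
    intro n
    -- (i) E[(g⋅bn)⋅π̃ | L] = E[g⋅bn | L]⋅E[π̃ | L] = 0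
    have hFb_int : Integrable (fun ω => (μ[Ya | mV U ⊔ mV L]) ω * bn n ω) μ :=
      hgg_int.mul_bdd (hbn_aesm n) (Filter.Eventually.of_forall (hbn_bd n))
    have hFb_sm : StronglyMeasurable[mV U ⊔ mV L]
        (fun ω => (μ[Ya | mV U ⊔ mV L]) ω * bn n ω) :=
      hgg_sm.mul (hbn_m2 n).stronglyMeasurable
    have hi := condexp_mul_of_condIndep hmL hmU hmZ hCI_ZU hFb_int hFb_sm hpit_smZ2 hpit_bd
    have hzero1 : μ[(fun ω => ((μ[Ya | mV U ⊔ mV L]) ω * bn n ω) * pit ω) | mV L]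
        =ᵐ[μ] fun _ => (0:ℝ) := by
      refine hi.trans ?_
      filter_upwards [hpit0] with ω h
      show (μ[(fun ω => (μ[Ya | mV U ⊔ mV L]) ω * bn n ω) | mV L]) ω * (μ[pit | mV L]) ω = 0
      rw [h]
      ring
    -- (ii) E[g⋅(cn⋅π̃) | L] = E[g | L]⋅E[cn⋅π̃ | L]
    have hcnpit_sm : StronglyMeasurable[mV Z ⊔ mV L] (fun ω => cn n ω * pit ω) :=
      (hcn_mZ2 n).stronglyMeasurable.mul hpit_smZ2
    have hcnpit_bd : ∀ᵐ ω ∂μ, |cn n ω * pit ω| ≤ ((n:ℝ)+1) * (2 * Cπ) := by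
      filter_upwards [hpit_bd] with ω h
      rw [abs_mul]
      exact mul_le_mul (hcn_bd n ω) h (abs_nonneg _) (by positivity)
    have hii := condexp_mul_of_condIndep hmL hmU hmZ hCI_ZU hgg_int hgg_sm hcnpit_sm hcnpit_bd
    -- (iii) E[bn⋅π̃ | L] = E[bn | L]⋅E[π̃ | L] = 0
    have hbn_sm2 : StronglyMeasurable[mV U ⊔ mV L] (bn n) := (hbn_m2 n).stronglyMeasurable
    have hiii := condexp_mul_of_condIndep hmL hmU hmZ hCI_ZU (hbn_int n) hbn_sm2
      hpit_smZ2 hpit_bd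
    have hzero3 : μ[(fun ω => bn n ω * pit ω) | mV L] =ᵐ[μ] fun _ => (0:ℝ) := by
      refine hiii.trans ?_
      filter_upwards [hpit0] with ω h
      show (μ[bn n | mV L]) ω * (μ[pit | mV L]) ω = 0
      rw [h]
      ring
    -- integrability of the summands
    have hcnpit_aesm : AEStronglyMeasurable (fun ω => cn n ω * pit ω) μ :=
      (hcn_aesm n).mul hpit_aesm
    have hint_a : Integrable (fun ω => ((μ[Ya | mV U ⊔ mV L]) ω * bn n ω) * pit ω) μ :=
      hFb_int.mul_bdd hpit_aesm hpit_bd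
    have hint_b : Integrable (fun ω => (μ[Ya | mV U ⊔ mV L]) ω * (cn n ω * pit ω)) μ :=
      hgg_int.mul_bdd hcnpit_aesm hcnpit_bd
    have hint_c : Integrable (fun ω => bn n ω * pit ω) μ :=
      (hbn_int n).mul_bdd hpit_aesm hpit_bd
    have hint_d : Integrable (fun ω => cn n ω * pit ω) μ :=
      integrable_of_ae_bdd hcnpit_aesm hcnpit_bd
    -- split sums
    have hadd1 : μ[(fun ω => (μ[Ya | mV U ⊔ mV L]) ω * ((bn n ω + cn n ω) * pit ω)) | mV L]
        =ᵐ[μ] μ[(fun ω => ((μ[Ya | mV U ⊔ mV L]) ω * bn n ω) * pit ω) | mV L]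
          + μ[(fun ω => (μ[Ya | mV U ⊔ mV L]) ω * (cn n ω * pit ω)) | mV L] := by
      refine Filter.EventuallyEq.trans ?_ (condExp_add hint_a hint_b (mV L))
      refine condExp_congr_ae (Filter.Eventually.of_forall fun ω => ?_)
      show (μ[Ya | mV U ⊔ mV L]) ω * ((bn n ω + cn n ω) * pit ω)
        = ((fun ω => ((μ[Ya | mV U ⊔ mV L]) ω * bn n ω) * pit ω)
            + fun ω => (μ[Ya | mV U ⊔ mV L]) ω * (cn n ω * pit ω)) ω
      simp only [Pi.add_apply]
      ring
    have hadd2 : μ[(fun ω => (bn n ω + cn n ω) * pit ω) | mV L]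
        =ᵐ[μ] μ[(fun ω => bn n ω * pit ω) | mV L] + μ[(fun ω => cn n ω * pit ω) | mV L] := by
      refine Filter.EventuallyEq.trans ?_ (condExp_add hint_c hint_d (mV L))
      refine condExp_congr_ae (Filter.Eventually.of_forall fun ω => ?_)
      show (bn n ω + cn n ω) * pit ω
        = ((fun ω => bn n ω * pit ω) + fun ω => cn n ω * pit ω) ω
      simp only [Pi.add_apply]
      ring
    filter_upwards [hadd1, hzero1, hii, hadd2, hzero3] with ω e1 e2 e3 e4 e5
    have e1' : (μ[(fun ω => (μ[Ya | mV U ⊔ mV L]) ω * ((bn n ω + cn n ω) * pit ω)) | mV L]) ω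
        = (μ[(fun ω => ((μ[Ya | mV U ⊔ mV L]) ω * bn n ω) * pit ω) | mV L]) ω
          + (μ[(fun ω => (μ[Ya | mV U ⊔ mV L]) ω * (cn n ω * pit ω)) | mV L]) ω := e1
    have e3' : (μ[(fun ω => (μ[Ya | mV U ⊔ mV L]) ω * (cn n ω * pit ω)) | mV L]) ω
        = (μ[μ[Ya | mV U ⊔ mV L] | mV L]) ω * (μ[(fun ω => cn n ω * pit ω) | mV L]) ω := e3
    have e4' : (μ[(fun ω => (bn n ω + cn n ω) * pit ω) | mV L]) ω
        = (μ[(fun ω => bn n ω * pit ω) | mV L]) ω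
          + (μ[(fun ω => cn n ω * pit ω) | mV L]) ω := e4
    show (μ[(fun ω => (μ[Ya | mV U ⊔ mV L]) ω * ((bn n ω + cn n ω) * pit ω)) | mV L]) ω
      = (μ[μ[Ya | mV U ⊔ mV L] | mV L]) ω * (μ[(fun ω => (bn n ω + cn n ω) * pit ω) | mV L]) ω
    rw [e1', e2, e3', e4', e5]
    ring
  -- integrability facts for bc⋅π̃
  have hbcpit_aesm : AEStronglyMeasurable
      (fun ω => (b (U ω) (L ω) + c (Z ω) (L ω)) * pit ω) μ :=
    hbc_meas.aestronglyMeasurable.mul hpit_aesm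
  have hbcpit_bd : ∀ᵐ ω ∂μ, |(b (U ω) (L ω) + c (Z ω) (L ω)) * pit ω| ≤ 2 * Cπ := by
    filter_upwards [hbc_bd, hpit_bd] with ω h1 h2
    rw [abs_mul]
    calc |b (U ω) (L ω) + c (Z ω) (L ω)| * |pit ω| ≤ 1 * (2 * Cπ) :=
        mul_le_mul h1 h2 (abs_nonneg _) one_pos.le
      _ = 2 * Cπ := one_mul _
  have hbcpit_int : Integrable (fun ω => (b (U ω) (L ω) + c (Z ω) (L ω)) * pit ω) μ :=
    integrable_of_ae_bdd hbcpit_aesm hbcpit_bd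
  have hf_int : Integrable
      (fun ω => (μ[Ya | mV U ⊔ mV L]) ω * ((b (U ω) (L ω) + c (Z ω) (L ω)) * pit ω)) μ :=
    hgg_int.mul_bdd hbcpit_aesm hbcpit_bd
  have hEbcpit_bd : ∀ᵐ ω ∂μ,
      |(μ[(fun ω => (b (U ω) (L ω) + c (Z ω) (L ω)) * pit ω) | mV L]) ω| ≤ 2 * Cπ :=
    abs_condexp_le_of_abs_le hmL hbcpit_int hbcpit_bd hpit2C
  have hR_int : Integrable
      (μ[μ[Ya | mV U ⊔ mV L] | mV L]
        * μ[(fun ω => (b (U ω) (L ω) + c (Z ω) (L ω)) * pit ω) | mV L]) μ := by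
    have := (integrable_condExp :
        Integrable (μ[μ[Ya | mV U ⊔ mV L] | mV L]) μ).mul_bdd
      ((stronglyMeasurable_condExp.mono hmL).aestronglyMeasurable) hEbcpit_bd
    exact this.congr (Filter.Eventually.of_forall fun ω => rfl)
  -- the key identity (J)
  have hJ : μ[(fun ω => (μ[Ya | mV U ⊔ mV L]) ω
        * ((b (U ω) (L ω) + c (Z ω) (L ω)) * pit ω)) | mV L]
      =ᵐ[μ] μ[μ[Ya | mV U ⊔ mV L] | mV L]
        * μ[(fun ω => (b (U ω) (L ω) + c (Z ω) (L ω)) * pit ω) | mV L] := by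
    refine (ae_eq_condExp_of_forall_setIntegral_eq hmL hf_int
      (fun s _ _ => hR_int.integrableOn) ?_
      ((stronglyMeasurable_condExp.mul stronglyMeasurable_condExp).aestronglyMeasurable)).symm
    intro s hs _
    have hsΩ : MeasurableSet[mΩ] s := hmL _ hs
    have hXs_sm : StronglyMeasurable[mV L]
        (fun ω => s.indicator (fun _ => (1:ℝ)) ω * (μ[μ[Ya | mV U ⊔ mV L] | mV L]) ω) :=
      ((stronglyMeasurable_const : StronglyMeasurable[mV L] (fun _ => (1:ℝ))).indicator hs).mul
        stronglyMeasurable_condExp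
    have hXs_int : Integrable (fun ω => s.indicator (fun _ => (1:ℝ)) ω
        * (μ[μ[Ya | mV U ⊔ mV L] | mV L]) ω) μ :=
      integrable_condExp.bdd_mul
        (((stronglyMeasurable_const :
          StronglyMeasurable[mΩ] (fun _ => (1:ℝ))).indicator hsΩ).aestronglyMeasurable)
        (Filter.Eventually.of_forall fun ω => by
          simpa [Real.norm_eq_abs] using abs_indicator_one_le' s ω)
    have hXs_aesm : AEStronglyMeasurable (fun ω => s.indicator (fun _ => (1:ℝ)) ω
        * (μ[μ[Ya | mV U ⊔ mV L] | mV L]) ω) μ := hXs_int.aestronglyMeasurable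
    have hhnpit_bd : ∀ n : ℕ, ∀ᵐ ω ∂μ, |(bn n ω + cn n ω) * pit ω| ≤ 2 * Cπ := fun n => by
      filter_upwards [hhn01 n, hpit_bd] with ω h1 h2
      rw [abs_mul]
      have habs : |bn n ω + cn n ω| ≤ 1 := abs_le.mpr ⟨by linarith [h1.1], h1.2⟩
      calc |bn n ω + cn n ω| * |pit ω| ≤ 1 * (2 * Cπ) :=
          mul_le_mul habs h2 (abs_nonneg _) one_pos.le
        _ = 2 * Cπ := one_mul _
    have hhnpit_aesm : ∀ n : ℕ, AEStronglyMeasurable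
        (fun ω => (bn n ω + cn n ω) * pit ω) μ := fun n =>
      ((hbn_aesm n).add (hcn_aesm n)).mul hpit_aesm
    have hhnpit_int : ∀ n : ℕ, Integrable (fun ω => (bn n ω + cn n ω) * pit ω) μ := fun n =>
      integrable_of_ae_bdd (hhnpit_aesm n) (hhnpit_bd n)
    have hgghn_int : ∀ n : ℕ, Integrable
        (fun ω => (μ[Ya | mV U ⊔ mV L]) ω * ((bn n ω + cn n ω) * pit ω)) μ := fun n =>
      hgg_int.mul_bdd (hhnpit_aesm n) (hhnpit_bd n)
    -- set-integral identity for each n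
    have hseq : ∀ n : ℕ, ∫ ω in s, (μ[Ya | mV U ⊔ mV L]) ω * ((bn n ω + cn n ω) * pit ω) ∂μ
        = ∫ ω, (s.indicator (fun _ => (1:ℝ)) ω * (μ[μ[Ya | mV U ⊔ mV L] | mV L]) ω)
            * ((bn n ω + cn n ω) * pit ω) ∂μ := by
      intro n
      have h1 : ∫ ω in s, (μ[Ya | mV U ⊔ mV L]) ω * ((bn n ω + cn n ω) * pit ω) ∂μ
          = ∫ ω in s, (μ[(fun ω => (μ[Ya | mV U ⊔ mV L]) ω
              * ((bn n ω + cn n ω) * pit ω)) | mV L]) ω ∂μ :=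
        (setIntegral_condExp hmL (hgghn_int n) hs).symm
      have h2 : ∫ ω in s, (μ[(fun ω => (μ[Ya | mV U ⊔ mV L]) ω
              * ((bn n ω + cn n ω) * pit ω)) | mV L]) ω ∂μ
          = ∫ ω in s, (μ[μ[Ya | mV U ⊔ mV L] | mV L]
              * μ[(fun ω => (bn n ω + cn n ω) * pit ω) | mV L]) ω ∂μ :=
        setIntegral_congr_ae hsΩ ((hJn n).mono fun ω h _ => h)
      have h3 : ∫ ω in s, (μ[μ[Ya | mV U ⊔ mV L] | mV L]
              * μ[(fun ω => (bn n ω + cn n ω) * pit ω) | mV L]) ω ∂μ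
          = ∫ ω, (s.indicator (fun _ => (1:ℝ)) ω * (μ[μ[Ya | mV U ⊔ mV L] | mV L]) ω)
              * (μ[(fun ω => (bn n ω + cn n ω) * pit ω) | mV L]) ω ∂μ := by
        rw [← integral_indicator hsΩ]
        refine integral_congr_ae (Filter.Eventually.of_forall fun ω => ?_)
        by_cases hω : ω ∈ s <;> simp [Set.indicator_apply, hω]
      have h4 : ∫ ω, (s.indicator (fun _ => (1:ℝ)) ω * (μ[μ[Ya | mV U ⊔ mV L] | mV L]) ω)
              * (μ[(fun ω => (bn n ω + cn n ω) * pit ω) | mV L]) ω ∂μ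
          = ∫ ω, (s.indicator (fun _ => (1:ℝ)) ω * (μ[μ[Ya | mV U ⊔ mV L] | mV L]) ω)
              * ((bn n ω + cn n ω) * pit ω) ∂μ :=
        (integral_mul_condexp hmL hXs_sm
          (hXs_int.mul_bdd (hhnpit_aesm n) (hhnpit_bd n)) (hhnpit_int n)).symm
      rw [h1, h2, h3, h4]
    -- limits
    have hlim1 : Filter.Tendsto
        (fun n : ℕ => ∫ ω in s, (μ[Ya | mV U ⊔ mV L]) ω * ((bn n ω + cn n ω) * pit ω) ∂μ)
        Filter.atTop
        (nhds (∫ ω in s, (μ[Ya | mV U ⊔ mV L]) ω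
          * ((b (U ω) (L ω) + c (Z ω) (L ω)) * pit ω) ∂μ)) := by
      refine tendsto_integral_of_dominated_convergence
        (fun ω => |(μ[Ya | mV U ⊔ mV L]) ω| * (2 * Cπ))
        (fun n => ((hgghn_int n).aestronglyMeasurable).restrict)
        ((hgg_int.abs.mul_const (2 * Cπ)).restrict)
        (fun n => ae_restrict_of_ae ?_) (ae_restrict_of_ae ?_)
      · filter_upwards [hhnpit_bd n] with ω h
        rw [Real.norm_eq_abs, abs_mul]
        exact mul_le_mul_of_nonneg_left h (abs_nonneg _)
      · refine Filter.Eventually.of_forall fun ω => ?_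
        exact ((htend ω).mul_const (pit ω)).const_mul _
    have hlim2 : Filter.Tendsto
        (fun n : ℕ => ∫ ω, (s.indicator (fun _ => (1:ℝ)) ω * (μ[μ[Ya | mV U ⊔ mV L] | mV L]) ω)
            * ((bn n ω + cn n ω) * pit ω) ∂μ)
        Filter.atTop
        (nhds (∫ ω, (s.indicator (fun _ => (1:ℝ)) ω * (μ[μ[Ya | mV U ⊔ mV L] | mV L]) ω)
          * ((b (U ω) (L ω) + c (Z ω) (L ω)) * pit ω) ∂μ)) := by
      refine tendsto_integral_of_dominated_convergence
        (fun ω => |s.indicator (fun _ => (1:ℝ)) ω * (μ[μ[Ya | mV U ⊔ mV L] | mV L]) ω| * (2 * Cπ))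
        (fun n => hXs_aesm.mul (hhnpit_aesm n))
        (hXs_int.abs.mul_const (2 * Cπ))
        (fun n => ?_) ?_
      · filter_upwards [hhnpit_bd n] with ω h
        rw [Real.norm_eq_abs, abs_mul]
        exact mul_le_mul_of_nonneg_left h (abs_nonneg _)
      · refine Filter.Eventually.of_forall fun ω => ?_
        exact ((htend ω).mul_const (pit ω)).const_mul _
    have hfun_eq : (fun n : ℕ => ∫ ω in s,
          (μ[Ya | mV U ⊔ mV L]) ω * ((bn n ω + cn n ω) * pit ω) ∂μ)
        = fun n : ℕ => ∫ ω, (s.indicator (fun _ => (1:ℝ)) ω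
            * (μ[μ[Ya | mV U ⊔ mV L] | mV L]) ω) * ((bn n ω + cn n ω) * pit ω) ∂μ :=
      funext hseq
    rw [hfun_eq] at hlim1
    have heq := tendsto_nhds_unique hlim1 hlim2
    have h5 : ∫ ω, (s.indicator (fun _ => (1:ℝ)) ω * (μ[μ[Ya | mV U ⊔ mV L] | mV L]) ω)
            * ((b (U ω) (L ω) + c (Z ω) (L ω)) * pit ω) ∂μ
        = ∫ ω, (s.indicator (fun _ => (1:ℝ)) ω * (μ[μ[Ya | mV U ⊔ mV L] | mV L]) ω)
            * (μ[(fun ω => (b (U ω) (L ω) + c (Z ω) (L ω)) * pit ω) | mV L]) ω ∂μ :=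
      integral_mul_condexp hmL hXs_sm (hXs_int.mul_bdd hbcpit_aesm hbcpit_bd) hbcpit_int
    have h6 : ∫ ω in s, (μ[μ[Ya | mV U ⊔ mV L] | mV L]
            * μ[(fun ω => (b (U ω) (L ω) + c (Z ω) (L ω)) * pit ω) | mV L]) ω ∂μ
        = ∫ ω, (s.indicator (fun _ => (1:ℝ)) ω * (μ[μ[Ya | mV U ⊔ mV L] | mV L]) ω)
            * (μ[(fun ω => (b (U ω) (L ω) + c (Z ω) (L ω)) * pit ω) | mV L]) ω ∂μ := by
      rw [← integral_indicator hsΩ]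
      refine integral_congr_ae (Filter.Eventually.of_forall fun ω => ?_)
      by_cases hω : ω ∈ s <;> simp [Set.indicator_apply, hω]
    calc ∫ ω in s, (μ[μ[Ya | mV U ⊔ mV L] | mV L]
            * μ[(fun ω => (b (U ω) (L ω) + c (Z ω) (L ω)) * pit ω) | mV L]) ω ∂μ
        = ∫ ω, (s.indicator (fun _ => (1:ℝ)) ω * (μ[μ[Ya | mV U ⊔ mV L] | mV L]) ω)
            * (μ[(fun ω => (b (U ω) (L ω) + c (Z ω) (L ω)) * pit ω) | mV L]) ω ∂μ := h6
      _ = ∫ ω, (s.indicator (fun _ => (1:ℝ)) ω * (μ[μ[Ya | mV U ⊔ mV L] | mV L]) ω)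
            * ((b (U ω) (L ω) + c (Z ω) (L ω)) * pit ω) ∂μ := h5.symm
      _ = ∫ ω in s, (μ[Ya | mV U ⊔ mV L]) ω
            * ((b (U ω) (L ω) + c (Z ω) (L ω)) * pit ω) ∂μ := heq.symm
  -- (★) identification of the conditional covariances
  have hint_BYπ : Integrable (fun ω => (B ω * Y ω) * π (Z ω) (L ω)) μ :=
    hintBY.mul_bdd hπ'_meas.aestronglyMeasurable (Filter.Eventually.of_forall fun ω => hπbd _ _)
  have c1 := covred (fun ω' => B ω' * Y ω') hintBY hint_BYπ
  have hint_Bπ : Integrable (fun ω => B ω * π (Z ω) (L ω)) μ :=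
    hBint.mul_bdd hπ'_meas.aestronglyMeasurable (Filter.Eventually.of_forall fun ω => hπbd _ _)
  have c4 := covred B hBint hint_Bπ
  -- c2 : E[(BY)⋅π̃ | L] = E[g⋅(bc⋅π̃) | L]
  have hBYpit_int : Integrable (fun ω => (B ω * Y ω) * pit ω) μ :=
    hintBY.mul_bdd hpit_aesm hpit_bd
  have inner1 : μ[(fun ω => (B ω * Y ω) * pit ω) | mV Z ⊔ mV U ⊔ mV L]
      =ᵐ[μ] fun ω => pit ω
        * ((μ[Ya | mV U ⊔ mV L]) ω * (b (U ω) (L ω) + c (Z ω) (L ω))) := by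
    have hpull := condExp_mul_of_stronglyMeasurable_left (μ := μ) hpit_sm3
      (show Integrable (pit * fun ω => B ω * Y ω) μ from
        hBYpit_int.congr (Filter.Eventually.of_forall fun ω => mul_comm _ _)) hintBY
    refine ((condExp_congr_ae
      (Filter.Eventually.of_forall fun ω => mul_comm _ _)).trans hpull).trans ?_
    filter_upwards [hBY3] with ω h
    show pit ω * (μ[(fun ω => B ω * Y ω) | mV Z ⊔ mV U ⊔ mV L]) ω = _
    rw [h]
  have c2 : μ[(fun ω => (B ω * Y ω) * pit ω) | mV L]
      =ᵐ[μ] μ[(fun ω => (μ[Ya | mV U ⊔ mV L]) ω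
          * ((b (U ω) (L ω) + c (Z ω) (L ω)) * pit ω)) | mV L] := by
    have t1 : μ[(fun ω => (B ω * Y ω) * pit ω) | mV L]
        =ᵐ[μ] μ[μ[(fun ω => (B ω * Y ω) * pit ω) | mV Z ⊔ mV U ⊔ mV L] | mV L] :=
      (condExp_condExp_of_le hL_le_m3 hm3).symm
    refine t1.trans ((condExp_congr_ae inner1).trans (condExp_congr_ae
      (Filter.Eventually.of_forall fun ω => ?_)))
    show pit ω * ((μ[Ya | mV U ⊔ mV L]) ω * (b (U ω) (L ω) + c (Z ω) (L ω)))
      = (μ[Ya | mV U ⊔ mV L]) ω * ((b (U ω) (L ω) + c (Z ω) (L ω)) * pit ω)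
    ring
  -- c4' : E[B⋅π̃ | L] = E[bc⋅π̃ | L]
  have hBpit_int : Integrable (fun ω => B ω * pit ω) μ := hBint.mul_bdd hpit_aesm hpit_bd
  have inner2 : μ[(fun ω => B ω * pit ω) | mV Z ⊔ mV U ⊔ mV L]
      =ᵐ[μ] fun ω => pit ω * (b (U ω) (L ω) + c (Z ω) (L ω)) := by
    have hpull := condExp_mul_of_stronglyMeasurable_left (μ := μ) hpit_sm3
      (show Integrable (pit * B) μ from
        hBpit_int.congr (Filter.Eventually.of_forall fun ω => mul_comm _ _)) hBint
    refine ((condExp_congr_ae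
      (Filter.Eventually.of_forall fun ω => mul_comm _ _)).trans hpull).trans ?_
    filter_upwards [hAIV] with ω h
    show pit ω * (μ[B | mV Z ⊔ mV U ⊔ mV L]) ω = _
    rw [h]
  have c4' : μ[(fun ω => B ω * pit ω) | mV L]
      =ᵐ[μ] μ[(fun ω => (b (U ω) (L ω) + c (Z ω) (L ω)) * pit ω) | mV L] := by
    have t1 : μ[(fun ω => B ω * pit ω) | mV L]
        =ᵐ[μ] μ[μ[(fun ω => B ω * pit ω) | mV Z ⊔ mV U ⊔ mV L] | mV L] :=
      (condExp_condExp_of_le hL_le_m3 hm3).symm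
    refine t1.trans ((condExp_congr_ae inner2).trans (condExp_congr_ae
      (Filter.Eventually.of_forall fun ω => ?_)))
    show pit ω * (b (U ω) (L ω) + c (Z ω) (L ω))
      = (b (U ω) (L ω) + c (Z ω) (L ω)) * pit ω
    ring
  have c5 : μ[μ[Ya | mV U ⊔ mV L] | mV L] =ᵐ[μ] μ[Ya | mV L] :=
    condExp_condExp_of_le hL_le_m2 hm2
  -- final pointwise identity
  have hfinal : ∀ᵐ ω ∂μ,
      condCov μ (mV L) (fun ω' => B ω' * Y ω') (fun ω' => π (Z ω') (L ω')) ω /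
        condCov μ (mV L) B (fun ω' => π (Z ω') (L ω')) ω = (μ[Ya | mV L]) ω := by
    filter_upwards [c1, c2, hJ, c4, c4', c5, hcov] with ω h1 h2 h3 h4 h5 h6 h7
    have e1 : condCov μ (mV L) (fun ω' => B ω' * Y ω') (fun ω' => π (Z ω') (L ω')) ω
        = (μ[Ya | mV L]) ω * condCov μ (mV L) B (fun ω' => π (Z ω') (L ω')) ω := by
      have h3' : (μ[(fun ω => (μ[Ya | mV U ⊔ mV L]) ω
            * ((b (U ω) (L ω) + c (Z ω) (L ω)) * pit ω)) | mV L]) ω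
          = (μ[μ[Ya | mV U ⊔ mV L] | mV L]) ω
            * (μ[(fun ω => (b (U ω) (L ω) + c (Z ω) (L ω)) * pit ω) | mV L]) ω := h3
      calc condCov μ (mV L) (fun ω' => B ω' * Y ω') (fun ω' => π (Z ω') (L ω')) ω
          = (μ[(fun ω => (B ω * Y ω) * pit ω) | mV L]) ω := h1
        _ = (μ[(fun ω => (μ[Ya | mV U ⊔ mV L]) ω
              * ((b (U ω) (L ω) + c (Z ω) (L ω)) * pit ω)) | mV L]) ω := h2
        _ = (μ[μ[Ya | mV U ⊔ mV L] | mV L]) ω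
              * (μ[(fun ω => (b (U ω) (L ω) + c (Z ω) (L ω)) * pit ω) | mV L]) ω := h3'
        _ = (μ[Ya | mV L]) ω
              * (μ[(fun ω => (b (U ω) (L ω) + c (Z ω) (L ω)) * pit ω) | mV L]) ω := by rw [h6]
        _ = (μ[Ya | mV L]) ω * (μ[(fun ω => B ω * pit ω) | mV L]) ω := by rw [h5]
        _ = (μ[Ya | mV L]) ω * condCov μ (mV L) B (fun ω' => π (Z ω') (L ω')) ω := by rw [h4]
    rw [e1]
    exact mul_div_cancel_right₀ _ h7
  calc ∫ ω, Ya ω ∂μ = ∫ ω, (μ[Ya | mV L]) ω ∂μ := (integral_condExp hmL).symm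
    _ = ∫ ω, condCov μ (mV L) (fun ω' => B ω' * Y ω') (fun ω' => π (Z ω') (L ω')) ω /
          condCov μ (mV L) B (fun ω' => π (Z ω') (L ω')) ω ∂μ :=
      (integral_congr_ae hfinal).symm
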